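/- arXiv:0806.0178 — 4 statements merged into one kernel-verified Lean document; each statement's English description precedes it below -/
import Mathlib

section
/- Let 0<p<1 and let G be a graph on n vertices in which every subset of at least n^{1/4} vertices has edge density at least p/2 (i.e., a set U with |U|=u ≥ n^{1/4} spans at least (p/2)·C(u,2) edges). Then every subset W ⊆ V(G) with |W| > n^{1/3} contains a complete subgraph on at least c·log n vertices, where c = -1/(12·log(p/2)), for all sufficiently large n. -/
/-! Build a clique inside `W` greedily. While the current candidate set `T` has at least `n^{1/4}`
vertices it has density `p/2`, so some vertex has at least `(p/2)(|T| - 1)` neighbours in `T`;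
add it to the clique and pass to those neighbours. Since `p/2 ≤ 1/2`, each step keeps at least a
`p/2`-fraction of `|T| + 1`, so a clique of size `s` is found with `(p/2)^s (|W| + 1) ≤ n^{1/4}`,
and `|W| > n^{1/3}` turns this into `s ≥ log n / (12 log (2/p))`. -/

open MeasureTheory Filter
open scoped Classical

/-- The number of edges of `G` lying inside the vertex set `U`. -/
noncomputable def edgesIn {n : ℕ} (G : SimpleGraph (Fin n)) (U : Finset (Fin n)) : ℕ :=
  (Finset.univ.filter fun e : Sym2 (Fin n) => e ∈ G.edgeSet ∧ ∀ v ∈ e, v ∈ U).card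

namespace SimpleGraph

variable {n : ℕ} (G : SimpleGraph (Fin n))

theorem edgesIn_eq_card_edgeFinset_induce (U : Finset (Fin n)) :
    edgesIn G U = ((⊤ : G.Subgraph).induce (U : Set (Fin n))).spanningCoe.edgeFinset.card := by
  unfold edgesIn
  congr 1
  ext e
  induction e using Sym2.ind with
  | _ a b => simp [and_comm, and_assoc]

theorem sum_card_filter_adj_eq_two_mul_edgesIn (U : Finset (Fin n)) :
    ∑ v ∈ U, (U.filter (G.Adj v)).card = 2 * edgesIn G U := by
  rw [edgesIn_eq_card_edgeFinset_induce, ← sum_degrees_eq_twice_card_edges,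
    ← Finset.sum_subset U.subset_univ]
  · refine Finset.sum_congr rfl fun v hv => ?_
    rw [← card_neighborFinset_eq_degree]
    congr 1
    ext w
    simp [hv]
  · intro v _ hv
    rw [← card_neighborFinset_eq_degree, Finset.card_eq_zero]
    ext w
    simp [hv]

theorem exists_le_card_filter_adj_of_le_edgesIn {δ : ℝ} {U : Finset (Fin n)} (hU : U.Nonempty)
    (hdense : δ * (U.card.choose 2 : ℝ) ≤ edgesIn G U) :
    ∃ v ∈ U, δ * ((U.card : ℝ) - 1) ≤ (U.filter (G.Adj v)).card := by
  obtain ⟨v, hv, hmax⟩ := U.exists_max_image (fun w => (U.filter (G.Adj w)).card) hU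
  refine ⟨v, hv, ?_⟩
  have hsum : 2 * edgesIn G U ≤ U.card * (U.filter (G.Adj v)).card := by
    rw [← G.sum_card_filter_adj_eq_two_mul_edgesIn U, ← smul_eq_mul, ← Finset.sum_const]
    exact Finset.sum_le_sum hmax
  have hsumR : (2 : ℝ) * edgesIn G U ≤ U.card * (U.filter (G.Adj v)).card := by
    exact_mod_cast hsum
  have hcard : (0 : ℝ) < U.card := by exact_mod_cast hU.card_pos
  rw [Nat.cast_choose_two] at hdense
  refine le_of_mul_le_mul_left ?_ hcard
  linarith

theorem exists_isClique_subset_pow_mul_card_le {δ t : ℝ} (hδ0 : 0 ≤ δ) (hδ : δ ≤ 1 / 2)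
    (ht : 1 ≤ t)
    (hdense : ∀ U : Finset (Fin n), t ≤ U.card → δ * (U.card.choose 2 : ℝ) ≤ edgesIn G U)
    (T : Finset (Fin n)) :
    ∃ S ⊆ T, G.IsClique (S : Set (Fin n)) ∧ δ ^ S.card * ((T.card : ℝ) + 1) ≤ t := by
  induction T using Finset.strongInduction with
  | H T ih =>
  obtain rfl | hT := T.eq_empty_or_nonempty
  · exact ⟨∅, subset_rfl, by simp, by simpa using ht⟩
  by_cases hsmall : (T.card : ℝ) < t
  · obtain ⟨v, hv⟩ := hT
    refine ⟨{v}, by simpa using hv, by simp, ?_⟩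
    rw [Finset.card_singleton, pow_one]
    nlinarith
  obtain ⟨v, hv, hdeg⟩ :=
    G.exists_le_card_filter_adj_of_le_edgesIn hT (hdense T (not_lt.mp hsmall))
  have hvN : v ∉ T.filter (G.Adj v) := by simp
  obtain ⟨S, hSN, hS, hbound⟩ :=
    ih _ (Finset.ssubset_iff_subset_ne.mpr ⟨Finset.filter_subset _ _, fun h => hvN (by rwa [h])⟩)
  have hvS : v ∉ S := fun h => hvN (hSN h)
  refine ⟨insert v S, Finset.insert_subset hv (hSN.trans (Finset.filter_subset _ _)), ?_, ?_⟩
  · rw [Finset.coe_insert]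
    exact hS.insert fun w hw _ => (Finset.mem_filter.mp (hSN hw)).2
  · have hstep : δ * ((T.card : ℝ) + 1) ≤ ((T.filter (G.Adj v)).card : ℝ) + 1 := by linarith
    calc δ ^ (insert v S).card * ((T.card : ℝ) + 1)
        = δ ^ S.card * (δ * ((T.card : ℝ) + 1)) := by
          rw [Finset.card_insert_of_notMem hvS]; ring
      _ ≤ δ ^ S.card * (((T.filter (G.Adj v)).card : ℝ) + 1) := by gcongr
      _ ≤ t := hbound

end SimpleGraph

theorem le_natCast_of_pow_mul_rpow_lt {δ x : ℝ} {s : ℕ} (hδ0 : 0 < δ) (hδ1 : δ < 1) (hx : 0 < x)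
    (h : δ ^ s * x ^ ((1 : ℝ) / 3) < x ^ ((1 : ℝ) / 4)) :
    -1 / (12 * Real.log δ) * Real.log x ≤ s := by
  have hlog := Real.log_lt_log (by positivity) h
  rw [Real.log_mul (by positivity) (by positivity), Real.log_pow, Real.log_rpow hx,
    Real.log_rpow hx] at hlog
  have hδlog : Real.log δ < 0 := Real.log_neg hδ0 hδ1
  rw [div_mul_eq_mul_div, div_le_iff_of_neg (by linarith)]
  linarith

/-- For fixed $0<p<1$ and all sufficiently large $n$: if every vertex
subset of $G$ of size at least $n^{1/4}$ has edge density at least $p/2$, then every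
$W$ with $|W| > n^{1/3}$ contains a complete subgraph on at least
$c\log n$ vertices, where $c = -1/(12\log(p/2))$. -/
theorem stmt0 (p : ℝ) (hp0 : 0 < p) (hp1 : p < 1) :
    ∃ N : ℕ, ∀ n ≥ N, ∀ G : SimpleGraph (Fin n),
      (∀ U : Finset (Fin n), (n : ℝ) ^ ((1 : ℝ) / 4) ≤ U.card →
        (p / 2) * (U.card.choose 2 : ℝ) ≤ (edgesIn G U : ℝ)) →
      ∀ W : Finset (Fin n), (n : ℝ) ^ ((1 : ℝ) / 3) < W.card →
        ∃ S : Finset (Fin n), ↑S ⊆ (W : Set (Fin n)) ∧ G.IsClique (S : Set (Fin n)) ∧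
          (-1 / (12 * Real.log (p / 2))) * Real.log n ≤ S.card := by
  refine ⟨1, fun n hn G hG W hW => ?_⟩
  have hn0 : (0 : ℝ) < n := by exact_mod_cast hn
  obtain ⟨S, hSW, hS, hbound⟩ := G.exists_isClique_subset_pow_mul_card_le (by linarith)
    (by linarith) (Real.one_le_rpow (by exact_mod_cast hn) (by norm_num)) hG W
  refine ⟨S, Finset.coe_subset.mpr hSW, hS, le_natCast_of_pow_mul_rpow_lt (by linarith)
    (by linarith) hn0 (lt_of_lt_of_le ?_ hbound)⟩
  gcongr
  linarith
end

section
/- Let G be a graph in which every induced subgraph on at least u vertices has a vertex of degree at least (p/3) times the number of vertices of that subgraph, where 0<p≤1. Then any set W of vertices with |W| ≥ u contains a clique of size at least ⌊log(u/|W|)/log(p/3)⌋ (equivalently, iterating the greedy step 'pick a maximum-degree vertex and restrict to its neighbourhood' from W produces, for each i with (p/3)^i·|W| ≥ u, a clique of size i together with a common neighbourhood of size at least (p/3)^i·|W|). -/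
open scoped Classical

/-!
Run the greedy procedure from `W`: as long as the current set `Wᵢ` has at least `u` vertices,
pick `wᵢ₊₁ ∈ Wᵢ` of maximal degree into `Wᵢ` and pass to its neighbourhood in `Wᵢ`. Each step
keeps at least a `q = p/3` fraction of the set, so `k` steps are possible as soon as
`u ≤ qᵏ |W|`, and the chosen vertices form a clique. The largest such `k` is at least
`⌊log (u/|W|) / log q⌋`.
-/

open Finset

theorem SimpleGraph.exists_isClique_card_eq_of_le_pow_mul {V : Type*} (G : SimpleGraph V)
    {q : ℝ} (hq0 : 0 ≤ q) (hq1 : q ≤ 1) (u : ℕ)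
    (h : ∀ s : Finset V, u ≤ #s → ∃ v ∈ s, q * #s ≤ #(s.filter fun w => G.Adj v w)) :
    ∀ (k : ℕ) (W : Finset V), (u : ℝ) ≤ q ^ k * #W →
      ∃ S ⊆ W, G.IsClique (S : Set V) ∧ #S = k := by
  intro k
  induction k with
  | zero => exact fun W _ => ⟨∅, empty_subset W, by simp, rfl⟩
  | succ k ih =>
    intro W hW
    have huW : u ≤ #W := by
      have : q ^ (k + 1) * #W ≤ #W := mul_le_of_le_one_left (by positivity) (pow_le_one₀ hq0 hq1)
      exact_mod_cast hW.trans this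
    obtain ⟨v, hvW, hv⟩ := h W huW
    set N := W.filter fun w => G.Adj v w
    have hN : (u : ℝ) ≤ q ^ k * #N :=
      calc (u : ℝ) ≤ q ^ (k + 1) * #W := hW
        _ = q ^ k * (q * #W) := by ring
        _ ≤ q ^ k * #N := by gcongr
    obtain ⟨S, hSN, hS, hScard⟩ := ih N hN
    have hadj : ∀ b ∈ S, G.Adj v b := fun b hb => (mem_filter.mp (hSN hb)).2
    have hvS : v ∉ S := fun hv => G.irrefl (hadj v hv)
    refine ⟨insert v S, insert_subset hvW (hSN.trans (filter_subset _ W)), ?_, ?_⟩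
    · rw [coe_insert]
      exact hS.insert fun b hb _ => hadj b hb
    · rw [card_insert_of_notMem hvS, hScard]

theorem Real.le_pow_floor_log_div_log {q x : ℝ} (hq0 : 0 < q) (hq1 : q < 1) (hx1 : x ≤ 1) :
    x ≤ q ^ ⌊Real.log x / Real.log q⌋₊ := by
  rcases le_or_gt x 0 with hx0 | hx0
  · exact hx0.trans (by positivity)
  have hlogq : Real.log q < 0 := Real.log_neg hq0 hq1
  have hfloor := Nat.floor_le (div_nonneg_of_nonpos (Real.log_nonpos hx0.le hx1) hlogq.le)
  rw [le_div_iff_of_neg hlogq, ← Real.log_pow] at hfloor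
  exact (Real.log_le_log_iff hx0 (by positivity)).mp hfloor

theorem stmt6_general {V : Type*} (G : SimpleGraph V) (p : ℝ) (hp0 : 0 < p) (hp1 : p ≤ 1)
    (u : ℕ)
    (h : ∀ s : Finset V, u ≤ s.card →
      ∃ v ∈ s, (p / 3) * (s.card : ℝ) ≤ ((s.filter fun w => G.Adj v w).card : ℝ)) :
    ∀ W : Finset V, u ≤ W.card →
      ∃ S : Finset V, ↑S ⊆ (W : Set V) ∧ G.IsClique (S : Set V) ∧
        ⌊Real.log ((u : ℝ) / (W.card : ℝ)) / Real.log (p / 3)⌋₊ ≤ S.card := by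
  intro W huW
  have hratio : (u : ℝ) ≤ (p / 3) ^ ⌊Real.log ((u : ℝ) / #W) / Real.log (p / 3)⌋₊ * #W := by
    rcases (Nat.zero_le u).eq_or_lt with rfl | hu
    · simp
    have hW : (0 : ℝ) < #W := by exact_mod_cast hu.trans_le huW
    rw [← div_le_iff₀ hW]
    exact Real.le_pow_floor_log_div_log (by positivity) (by linarith)
      ((div_le_one hW).mpr (by exact_mod_cast huW))
  obtain ⟨S, hSW, hS, hcard⟩ :=
    G.exists_isClique_card_eq_of_le_pow_mul (by positivity) (by linarith) u h _ W hratio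
  exact ⟨S, coe_subset.mpr hSW, hS, hcard.ge⟩

/-- If in `G` every induced subgraph on at least `u` vertices has a vertex of
degree at least `(p/3)` times its number of vertices (`0<p≤1`), then every `W` with `|W| ≥ u`
contains a clique of size at least `⌊log(u/|W|)/log(p/3)⌋`. -/
theorem stmt6 {V : Type*} [Fintype V] (G : SimpleGraph V) (p : ℝ) (hp0 : 0 < p) (hp1 : p ≤ 1)
    (u : ℕ)
    (h : ∀ s : Finset V, u ≤ s.card →
      ∃ v ∈ s, (p / 3) * (s.card : ℝ) ≤ ((s.filter fun w => G.Adj v w).card : ℝ)) :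
    ∀ W : Finset V, u ≤ W.card →
      ∃ S : Finset V, ↑S ⊆ (W : Set V) ∧ G.IsClique (S : Set V) ∧
        ⌊Real.log ((u : ℝ) / (W.card : ℝ)) / Real.log (p / 3)⌋₊ ≤ S.card :=
  stmt6_general G p hp0 hp1 u h
end

section
/- Let G be a graph on n vertices whose complement has the property that every vertex subset of size greater than n^{1/3} contains an independent set (in G) of size at least c·log n, for some c > 0. If W ⊆ V(G) satisfies χ(G[W]) ≤ h and |V(G)\W| ≤ M, then χ(G) ≤ h + M/(c·log n) + n^{1/3} + 1. -/
/-!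
Colour `G[W]` with `h` colours and colour the at most `M` remaining vertices greedily: as long
as more than `n^{1/3}` of them are uncoloured, the hypothesis provides an independent set of at
least `c·log n` uncoloured vertices, which receives a fresh colour. This uses at most
`⌈M/(c·log n)⌉` colours, and the last `≤ n^{1/3}` vertices each get a colour of their own.
-/

open Finset

namespace SimpleGraph

variable {V : Type*} (G : SimpleGraph V)

theorem Colorable.induce_union {s t : Set V} {a b : ℕ} (hs : (G.induce s).Colorable a)
    (ht : (G.induce t).Colorable b) : (G.induce (s ∪ t)).Colorable (a + b) := by
  classical
  obtain ⟨Cs⟩ := hs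
  obtain ⟨Ct⟩ := ht
  let C : (G.induce (s ∪ t)).Coloring (Fin a ⊕ Fin b) :=
    Coloring.mk
      (fun v => if hv : (v : V) ∈ s then .inl (Cs ⟨v, hv⟩)
        else .inr (Ct ⟨v, v.2.resolve_left hv⟩))
      (fun {v w} hvw => by
        by_cases hv : (v : V) ∈ s <;> by_cases hw : (w : V) ∈ s <;>
          simp only [hv, hw, dite_true, dite_false, ne_eq, reduceCtorEq, not_false_eq_true,
            Sum.inl.injEq, Sum.inr.injEq]
        · exact Cs.valid (G := G.induce s) hvw
        · exact Ct.valid (G := G.induce t) hvw)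
  simpa using C.colorable

theorem Colorable.of_induce_compl {s : Set V} {a b : ℕ} (hs : (G.induce s).Colorable a)
    (hsc : (G.induce sᶜ).Colorable b) : G.Colorable (a + b) := by
  have := Colorable.induce_union G hs hsc
  rw [Set.union_compl_self] at this
  exact (colorable_congr G.induceUnivIso).mp this

theorem IsIndepSet.colorable_induce {s : Set V} (hs : G.IsIndepSet s) :
    (G.induce s).Colorable 1 := by
  rw [colorable_one_iff]
  ext v w
  simpa using fun hvw => hs v.2 w.2 (G.ne_of_adj hvw) hvw

theorem colorable_induce_card (U : Finset V) :
    (G.induce (U : Set V)).Colorable #U := by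
  simpa using (G.induce (U : Set V)).colorable_of_fintype

theorem colorable_induce_of_forall_exists_isIndepSet [DecidableEq V] {r ℓ : ℝ}
    (hind : ∀ U : Finset V, r < #U → ∃ S ⊆ U, G.IsIndepSet (S : Set V) ∧ ℓ ≤ #S) (k : ℕ) :
    ∀ U : Finset V, (#U : ℝ) ≤ r + k * ℓ → (G.induce (U : Set V)).Colorable (⌊r⌋₊ + k) := by
  induction k with
  | zero =>
    intro U hU
    exact (G.colorable_induce_card U).mono (Nat.le_floor (by simpa using hU))
  | succ k ih =>
    intro U hU
    by_cases hsmall : (#U : ℝ) ≤ r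
    · exact (G.colorable_induce_card U).mono (by have := Nat.le_floor hsmall; omega)
    obtain ⟨S, hSU, hS, hℓS⟩ := hind U (not_le.mp hsmall)
    have hrest : (#(U \ S) : ℝ) ≤ r + k * ℓ := by
      rw [card_sdiff_of_subset hSU, Nat.cast_sub (card_le_card hSU)]
      push_cast at hU
      linarith
    have := (ih (U \ S) hrest).induce_union G hS.colorable_induce
    rwa [← coe_union, sdiff_union_of_subset hSU] at this

end SimpleGraph

open SimpleGraph

open scoped Classical

/-- Suppose every vertex subset of `G` (a graph on `n ≥ 2` vertices) of size
greater than `n^{1/3}` contains an independent set of size at least `c·log n`. If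
`χ(G[W]) ≤ h` and at most `M` vertices lie outside `W`, then
`χ(G) ≤ h + M/(c·log n) + n^{1/3} + 1` (as `χ(G)` is an integer, this is expressed via the
floor of the right-hand side). Independent sets are cliques of the complement. -/
theorem stmt11 (n : ℕ) (hn : 2 ≤ n) (G : SimpleGraph (Fin n)) (c : ℝ) (hc : 0 < c)
    (hind : ∀ W : Finset (Fin n), (n : ℝ) ^ ((1 : ℝ) / 3) < W.card →
      ∃ S : Finset (Fin n), S ⊆ W ∧ Gᶜ.IsClique (S : Set (Fin n)) ∧ c * Real.log n ≤ S.card)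
    (W : Set (Fin n)) (h : ℕ) (M : ℝ)
    (hW : (G.induce W).chromaticNumber ≤ (h : ℕ∞)) (hM : (Wᶜ.ncard : ℝ) ≤ M) :
    G.chromaticNumber ≤
      (⌊(h : ℝ) + M / (c * Real.log n) + (n : ℝ) ^ ((1 : ℝ) / 3) + 1⌋₊ : ℕ∞) := by
  set r := (n : ℝ) ^ ((1 : ℝ) / 3)
  set ℓ := c * Real.log n
  have hℓ : 0 < ℓ := mul_pos hc (Real.log_pos (by exact_mod_cast hn))
  have hM0 : 0 ≤ M / ℓ := div_nonneg ((Nat.cast_nonneg _).trans hM) hℓ.le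
  set k := ⌈M / ℓ⌉₊
  have hWc : (#Wᶜ.toFinset : ℝ) ≤ r + k * ℓ := by
    have := (div_le_iff₀ hℓ).mp (Nat.le_ceil (M / ℓ))
    rw [← Set.ncard_eq_toFinset_card']
    linarith [Real.rpow_nonneg (Nat.cast_nonneg n) ((1 : ℝ) / 3)]
  have hcolWc := G.colorable_induce_of_forall_exists_isIndepSet
    (by simpa only [isClique_compl] using hind) k Wᶜ.toFinset hWc
  rw [Set.coe_toFinset] at hcolWc
  have hcolG := (chromaticNumber_le_iff_colorable.mp hW).of_induce_compl G hcolWc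
  have hcount : h + (⌊r⌋₊ + k) ≤ ⌊(h : ℝ) + M / ℓ + r + 1⌋₊ := by
    apply Nat.le_floor
    push_cast
    linarith [Nat.floor_le (Real.rpow_nonneg (Nat.cast_nonneg n) ((1 : ℝ) / 3)),
      Nat.ceil_lt_add_one hM0]
  exact chromaticNumber_le_iff_colorable.mpr (hcolG.mono hcount)
end

section
/- Fix 0 < p < 1. For G ∈ G(n,p), with probability tending to 1 as n → ∞, every subset W ⊆ V(G) with |W| > n^{1/3} contains an independent set of size at least c·log n, where c = c(p) = -1/(12·log((1-p)/2)) > 0. -/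
/-!
Let `α = (1 + p)/2`. With probability tending to one, no vertex set `U` with `|U| ≥ m(n)`,
`m(n) = O(log n)`, spans more than `α·C(|U|, 2)` edges: for a single `U`, Markov's inequality for
`C(X, j)`, `X` the number of edges in `U`, bounds the probability by `n^(-2|U|)`, and summing over
all nonempty `U` gives at most `(1 + n⁻²)^n - 1 → 0`. Outside this event every `W` with `|W| ≥ m`
has a vertex with at most `α(|W| - 1)` neighbours in `W`. Putting it into the independent set and
recursing on its non-neighbours in `W` divides `|W|` by at most `r = 2/(1 - p)`, so
`|W| + 1 ≥ r^k (m + 1)` gives an independent set of size `k`. For `k = ⌈c log n⌉` we have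
`r^k ≤ r n^(1/12)`, and `r n^(1/12) (m + 1) ≤ n^(1/3)` for large `n`.
-/

open MeasureTheory Filter
open scoped Classical

/-- The graph determined by an edge-indicator function. -/
def graphOf {n : ℕ} (ω : Sym2 (Fin n) → Bool) : SimpleGraph (Fin n) where
  Adj v w := v ≠ w ∧ ω s(v, w) = true
  symm := by
    constructor
    intro v w h
    exact ⟨h.1.symm, by rw [Sym2.eq_swap]; exact h.2⟩
  loopless := by constructor; intro v h; exact h.1 rfl

/-- The Erdős–Rényi measure `G(n,p)`: each potential edge is present independently with
probability `p` (for `p ≤ 1` the parameter `min (ofReal p) 1` is just `ofReal p`). -/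
noncomputable def gnp (n : ℕ) (p : ℝ) : Measure (Sym2 (Fin n) → Bool) :=
  Measure.pi fun _ => (PMF.bernoulli (min (Real.toNNReal p) 1) (min_le_right _ _)).toMeasure

open Finset Real
open scoped ENNReal NNReal

section Greedy

variable {V : Type*} (G : SimpleGraph V)

theorem exists_isNIndepSet_of_forall_exists_degree_le {α : ℝ} (hα : 1 / 2 ≤ α) (hα1 : α < 1)
    {m : ℕ} (hdeg : ∀ U : Finset V, m ≤ #U → ∃ v ∈ U, (#{w ∈ U | G.Adj v w} : ℝ) ≤ α * (#U - 1))
    (k : ℕ) (W : Finset V) (hW : (1 - α)⁻¹ ^ k * (m + 1) ≤ #W + 1) :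
    ∃ S ⊆ W, G.IsNIndepSet k S := by
  induction k generalizing W with
  | zero => exact ⟨∅, empty_subset _, by simp [SimpleGraph.isNIndepSet_iff]⟩
  | succ k ih =>
    have hα0 : 0 < 1 - α := by linarith
    have hr : 2 ≤ (1 - α)⁻¹ := by rw [le_inv_comm₀ two_pos hα0]; linarith
    have hm : m ≤ #W := by
      have : 2 * ((m : ℝ) + 1) ≤ (1 - α)⁻¹ ^ (k + 1) * (m + 1) := by
        gcongr
        exact hr.trans (le_self_pow₀ (by linarith) (Nat.succ_ne_zero k))
      exact_mod_cast (show (m : ℝ) ≤ #W by linarith)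
    obtain ⟨v, hvW, hv⟩ := hdeg W hm
    set W' := {w ∈ W.erase v | ¬G.Adj v w}
    have hW' : (1 - α) * (#W - 1) ≤ #W' := by
      have hsplit := card_filter_add_card_filter_not (s := W.erase v) (G.Adj v)
      have hnbr : #{w ∈ W.erase v | G.Adj v w} ≤ #{w ∈ W | G.Adj v w} :=
        card_le_card (filter_subset_filter _ (erase_subset _ _))
      rw [card_erase_of_mem hvW] at hsplit
      have : (#W : ℝ) - 1 = #{w ∈ W.erase v | G.Adj v w} + #W' := by
        rw [← Nat.cast_pred (card_pos.2 ⟨v, hvW⟩), ← hsplit]; push_cast; ring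
      have : (#{w ∈ W.erase v | G.Adj v w} : ℝ) ≤ #{w ∈ W | G.Adj v w} := by exact_mod_cast hnbr
      nlinarith
    have hpow : (1 - α) * (1 - α)⁻¹ ^ (k + 1) = (1 - α)⁻¹ ^ k := by
      rw [pow_succ', ← mul_assoc, mul_inv_cancel₀ hα0.ne', one_mul]
    obtain ⟨S, hSW', hS⟩ := ih W' (by
      have := mul_le_mul_of_nonneg_left hW hα0.le
      rw [← mul_assoc, hpow] at this
      linarith)
    refine ⟨insert v S, insert_subset hvW ((hSW'.trans (filter_subset _ _)).trans
      (erase_subset _ _)), ?_⟩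
    rw [← SimpleGraph.isNClique_compl] at hS ⊢
    refine hS.insert fun w hw => ?_
    have hw' := mem_filter.1 (hSW' hw)
    exact (SimpleGraph.compl_adj G v w).2 ⟨(ne_of_mem_erase hw'.1).symm, hw'.2⟩

end Greedy

section EdgeCount

variable {n : ℕ}

lemma edgesIn_eq_card_image (G : SimpleGraph (Fin n)) (U : Finset (Fin n)) :
    edgesIn G U = #({x ∈ U ×ˢ U | G.Adj x.1 x.2}.image Sym2.mk.uncurry) := by
  rw [edgesIn]
  congr 1
  ext e
  induction e using Sym2.ind with
  | _ a b =>
    simp only [mem_filter, mem_univ, true_and, SimpleGraph.mem_edgeSet, Sym2.mem_iff,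
      forall_eq_or_imp, forall_eq, mem_image, mem_product, Prod.exists]
    constructor
    · rintro ⟨h, ha, hb⟩; exact ⟨a, b, ⟨⟨ha, hb⟩, h⟩, rfl⟩
    · rintro ⟨x, y, ⟨⟨hx, hy⟩, h⟩, hxy⟩
      rcases Sym2.eq_iff.1 hxy with ⟨rfl, rfl⟩ | ⟨rfl, rfl⟩
      · exact ⟨h, hx, hy⟩
      · exact ⟨h.symm, hy, hx⟩

lemma two_mul_edgesIn (G : SimpleGraph (Fin n)) (U : Finset (Fin n)) :
    2 * edgesIn G U = ∑ v ∈ U, #{w ∈ U | G.Adj v w} := by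
  have hpairs : ∑ v ∈ U, #{w ∈ U | G.Adj v w} = #{x ∈ U ×ˢ U | G.Adj x.1 x.2} := by
    simp only [card_filter, sum_product]
  rw [hpairs, edgesIn_eq_card_image, card_eq_sum_card_image (Sym2.mk.uncurry : _ → Sym2 (Fin n)),
    mul_comm, sum_const_nat]
  intro e he
  obtain ⟨⟨a, b⟩, hab, rfl⟩ := mem_image.1 he
  have hab' := (mem_filter.1 hab).2
  have hba := hab'.symm
  have : {z ∈ {x ∈ U ×ˢ U | G.Adj x.1 x.2} | Sym2.mk.uncurry z = Sym2.mk.uncurry (a, b)} =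
      {(a, b), (b, a)} := by
    ext ⟨x, y⟩
    simp only [mem_filter, mem_insert, mem_singleton, Prod.mk.injEq]
    aesop
  rw [this, card_pair fun h => hab'.ne (Prod.mk.inj h).1]

lemma exists_card_adj_le_of_edgesIn_le (G : SimpleGraph (Fin n)) {U : Finset (Fin n)}
    (hU : U.Nonempty) {α : ℝ} (h : (edgesIn G U : ℝ) ≤ α * (#U).choose 2) :
    ∃ v ∈ U, (#{w ∈ U | G.Adj v w} : ℝ) ≤ α * (#U - 1) := by
  refine exists_le_of_sum_le hU ?_
  have h2 : (2 * edgesIn G U : ℝ) = ∑ v ∈ U, (#{w ∈ U | G.Adj v w} : ℝ) := by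
    exact_mod_cast two_mul_edgesIn G U
  rw [sum_const, nsmul_eq_mul, ← h2]
  rw [Nat.cast_choose_two] at h
  linarith

end EdgeCount

def pairsIn {V : Type*} [DecidableEq V] (U : Finset V) : Finset (Sym2 V) :=
  {e ∈ U.sym2 | ¬e.IsDiag}

lemma card_pairsIn {V : Type*} [DecidableEq V] (U : Finset V) :
    #(pairsIn U) = (#U).choose 2 := by
  rw [pairsIn, sym2_eq_image, Sym2.filter_image_mk_not_isDiag, Sym2.card_image_offDiag]

section BernoulliProduct

variable {ι : Type*} [Fintype ι] (q : ℝ≥0) (hq : q ≤ 1)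

lemma pi_bernoulli_forall_true (S : Finset ι) :
    Measure.pi (fun _ : ι => (PMF.bernoulli q hq).toMeasure) {ω | ∀ i ∈ S, ω i = true} =
      q ^ #S := by
  change Measure.pi _ ((S : Set ι).pi fun _ => {true}) = _
  rw [Measure.pi_pi_finset, PMF.toMeasure_apply_singleton _ _ (measurableSet_singleton _),
    PMF.bernoulli_apply, prod_const]
  rfl

/-- Markov's inequality for `C(X, j)`, which counts the `j`-sets of successes in `A`; each of the
`C(#A, j)` candidate `j`-sets is all successes with probability `q ^ j`. -/
lemma choose_mul_pi_bernoulli_le (A : Finset ι) (T j : ℕ) :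
    T.choose j * Measure.pi (fun _ : ι => (PMF.bernoulli q hq).toMeasure)
        {ω | T ≤ #{i ∈ A | ω i = true}} ≤ (#A).choose j * q ^ j := by
  set μ := Measure.pi fun _ : ι => (PMF.bernoulli q hq).toMeasure
  set f : (ι → Bool) → ℝ≥0∞ := fun ω =>
    ∑ S ∈ A.powersetCard j, Set.indicator {ω | ∀ i ∈ S, ω i = true} 1 ω
  have hf : ∀ ω, T ≤ #{i ∈ A | ω i = true} → (T.choose j : ℝ≥0∞) ≤ f ω := by
    intro ω hω
    have hsub : ({i ∈ A | ω i = true}.powersetCard j) ⊆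
        {S ∈ A.powersetCard j | ∀ i ∈ S, ω i = true} := by
      intro S hS
      obtain ⟨hSA, hSj⟩ := mem_powersetCard.1 hS
      exact mem_filter.2 ⟨mem_powersetCard.2 ⟨hSA.trans (filter_subset _ _), hSj⟩,
        fun i hi => (mem_filter.1 (hSA hi)).2⟩
    simp only [f, Set.indicator_apply, Set.mem_ofPred_eq, Pi.one_apply, sum_boole]
    calc (T.choose j : ℝ≥0∞) ≤ (#{i ∈ A | ω i = true}).choose j := by gcongr
      _ = #({i ∈ A | ω i = true}.powersetCard j) := by rw [card_powersetCard]
      _ ≤ _ := by gcongr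
  calc T.choose j * μ {ω | T ≤ #{i ∈ A | ω i = true}}
      ≤ T.choose j * μ {ω | T.choose j ≤ f ω} := by gcongr; exact hf _
    _ ≤ ∫⁻ ω, f ω ∂μ := mul_meas_ge_le_lintegral (measurable_of_countable f) _
    _ = ∑ S ∈ A.powersetCard j, μ {ω | ∀ i ∈ S, ω i = true} := by
      rw [lintegral_finsetSum _ fun S _ => measurable_of_countable _]
      exact sum_congr rfl fun S _ => lintegral_indicator_one (Set.to_countable _).measurableSet
    _ = (#A).choose j * q ^ j := by
      rw [sum_congr rfl fun S hS => by rw [pi_bernoulli_forall_true, (mem_powersetCard.1 hS).2],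
        sum_const, card_powersetCard, nsmul_eq_mul]

end BernoulliProduct

lemma choose_mul_pow_le_choose_mul_pow {M T j : ℕ} {x y : ℝ} (hx : 0 ≤ x) (hy : 0 ≤ y)
    (hj : j ≤ T + 1) (h : M * x ≤ (T + 1 - j) * y) :
    (M.choose j : ℝ) * x ^ j ≤ T.choose j * y ^ j := by
  have hdesc (N : ℕ) : (N.descFactorial j : ℝ) = j.factorial * N.choose j := by
    exact_mod_cast N.descFactorial_eq_factorial_mul_choose j
  have hT : ((T + 1 - j : ℕ) : ℝ) = T + 1 - j := by push_cast [Nat.cast_sub hj]; ring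
  rw [← mul_le_mul_iff_right₀ (by positivity : (0 : ℝ) < j.factorial), ← mul_assoc, ← mul_assoc,
    ← hdesc, ← hdesc]
  calc (M.descFactorial j : ℝ) * x ^ j ≤ (M * x) ^ j := by
        rw [mul_pow]; gcongr; exact_mod_cast M.descFactorial_le_pow j
    _ ≤ ((T + 1 - j) * y) ^ j := by gcongr
    _ ≤ T.descFactorial j * y ^ j := by
        rw [mul_pow, ← hT]; gcongr; exact_mod_cast T.pow_sub_le_descFactorial j

section RandomGraph

variable {n : ℕ}

instance (p : ℝ) : IsProbabilityMeasure (gnp n p) := by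
  unfold gnp; infer_instance

lemma graphOf_adj (ω : Sym2 (Fin n) → Bool) (v w : Fin n) :
    (graphOf ω).Adj v w ↔ v ≠ w ∧ ω s(v, w) = true := Iff.rfl

lemma edgesIn_graphOf (ω : Sym2 (Fin n) → Bool) (U : Finset (Fin n)) :
    edgesIn (graphOf ω) U = #{e ∈ pairsIn U | ω e = true} := by
  rw [edgesIn, pairsIn, filter_filter]
  congr 1
  ext e
  induction e using Sym2.ind with
  | _ a b =>
    simp only [mem_filter, mem_univ, true_and, mem_sym2_iff, SimpleGraph.mem_edgeSet,
      Sym2.mk_isDiag_iff, graphOf_adj]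
    tauto

/-- Markov's inequality for `C(X, j)` with `j ≈ (α - p) M / 2`, `M = C(|U|, 2)`: a dense `U` has
`X ≥ T > α M`, and then `C(M, j) p ^ j ≤ C(T, j) (2p / (α + p)) ^ j`. -/
lemma gnp_lt_edgesIn_le {p α : ℝ} (hp0 : 0 < p) (hpα : p ≤ α) (hα1 : α ≤ 1)
    (U : Finset (Fin n)) :
    gnp n p {ω | α * (#U).choose 2 < edgesIn (graphOf ω) U} ≤
      ENNReal.ofReal ((2 * p / (α + p)) ^ ⌊(α - p) / 2 * (#U).choose 2⌋₊) := by
  set M := (#U).choose 2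
  set T := ⌊α * M⌋₊ + 1
  set j := ⌊(α - p) / 2 * M⌋₊
  have hαp : 0 < α + p := by linarith
  have hαM : 0 ≤ α * M := mul_nonneg (by linarith) M.cast_nonneg
  have hjM : 0 ≤ (α - p) / 2 * M := mul_nonneg (by linarith) M.cast_nonneg
  have hjT : j ≤ T := (Nat.floor_mono (by gcongr; linarith)).trans (Nat.le_succ _)
  have hdense : {ω | α * M < edgesIn (graphOf ω) U} ⊆
      {ω | T ≤ #{e ∈ pairsIn U | ω e = true}} := fun ω hω => by
    change T ≤ _
    rw [← edgesIn_graphOf]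
    exact (Nat.floor_lt hαM).2 hω
  have hratio : (M.choose j : ℝ) * p ^ j ≤ T.choose j * (2 * p / (α + p)) ^ j := by
    refine choose_mul_pow_le_choose_mul_pow hp0.le (by positivity) (by omega) ?_
    have hTj : (α + p) / 2 * M ≤ T + 1 - j := by
      have hT : α * M < T := by push_cast [T]; exact Nat.lt_floor_add_one _
      have hj : (j : ℝ) ≤ (α - p) / 2 * M := Nat.floor_le hjM
      linarith
    calc (M : ℝ) * p = (α + p) / 2 * M * (2 * p / (α + p)) := by field_simp
      _ ≤ _ := by gcongr
  have hq : ((min p.toNNReal 1 : ℝ≥0) : ℝ≥0∞) = ENNReal.ofReal p := by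
    rw [min_eq_left (Real.toNNReal_le_one.2 (by linarith))]; rfl
  have hC : (T.choose j : ℝ≥0∞) ≠ 0 := by exact_mod_cast (Nat.choose_pos hjT).ne'
  refine (ENNReal.mul_le_mul_iff_right hC (ENNReal.natCast_ne_top _)).1 ?_
  calc (T.choose j : ℝ≥0∞) * gnp n p {ω | α * M < edgesIn (graphOf ω) U}
      ≤ T.choose j * gnp n p {ω | T ≤ #{e ∈ pairsIn U | ω e = true}} := by gcongr
    _ ≤ M.choose j * ENNReal.ofReal p ^ j := by
      rw [← hq, show M = #(pairsIn U) from (card_pairsIn U).symm]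
      exact choose_mul_pi_bernoulli_le _ _ _ _ _
    _ ≤ T.choose j * ENNReal.ofReal ((2 * p / (α + p)) ^ j) := by
      rw [← ENNReal.ofReal_pow hp0.le, ← ENNReal.ofReal_natCast, ← ENNReal.ofReal_natCast,
        ← ENNReal.ofReal_mul (by positivity), ← ENNReal.ofReal_mul (by positivity)]
      exact ENNReal.ofReal_le_ofReal hratio

end RandomGraph

lemma pow_floor_mul_choose_two_le {ρ δ N : ℝ} (hρ0 : 0 < ρ) (hρ1 : ρ ≤ 1)
    (hN : 0 < N) {u : ℕ} (hu : 2 * log N - log ρ ≤ δ * -log ρ / 2 * (u - 1)) :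
    ρ ^ ⌊δ * u.choose 2⌋₊ ≤ (N ^ 2)⁻¹ ^ u := by
  rcases Nat.eq_zero_or_pos u with rfl | hu0
  · simp
  set j := ⌊δ * u.choose 2⌋₊
  have hlogρ : log ρ ≤ 0 := log_nonpos hρ0.le hρ1
  have hj : δ * (u * (u - 1) / 2) - 1 ≤ j := by
    rw [← Nat.cast_choose_two]; exact (Nat.sub_one_lt_floor _).le
  have hu1 : (1 : ℝ) ≤ u := by exact_mod_cast hu0
  rw [← log_le_log_iff (by positivity) (by positivity), log_pow, log_pow, log_inv, log_pow]
  calc (j : ℝ) * log ρ ≤ (δ * (u * (u - 1) / 2) - 1) * log ρ :=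
        mul_le_mul_of_nonpos_right hj hlogρ
    _ = -(u * (δ * -log ρ / 2 * (u - 1))) - log ρ := by ring
    _ ≤ -(u * (2 * log N - log ρ)) - log ρ := by gcongr
    _ ≤ u * -(2 * log N) := by nlinarith
    _ = u * -((2 : ℕ) * log N) := by norm_num

lemma sum_pow_card_le_one_add_pow_sub_one {V : Type*} [Fintype V] {x : ℝ} (hx : 0 ≤ x)
    (F : Finset (Finset V)) (hF : ∅ ∉ F) :
    ∑ U ∈ F, x ^ #U ≤ (1 + x) ^ Fintype.card V - 1 := by
  have hall : ∑ U : Finset V, x ^ #U = (1 + x) ^ Fintype.card V := by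
    simpa [powerset_univ, add_comm] using sum_pow_mul_eq_add_pow x 1 (univ : Finset V)
  rw [← hall, ← add_sum_erase _ _ (mem_univ ∅), card_empty, pow_zero, add_sub_cancel_left]
  exact sum_le_sum_of_subset_of_nonneg (fun U hU => mem_erase.2 ⟨ne_of_mem_of_not_mem hU hF,
    mem_univ _⟩) fun _ _ _ => by positivity

lemma tendsto_one_add_inv_sq_pow_sub_one :
    Tendsto (fun n : ℕ => (1 + ((n : ℝ) ^ 2)⁻¹) ^ n - 1) atTop (nhds 0) := by
  have hexp : Tendsto (fun n : ℕ => exp (n : ℝ)⁻¹ - 1) atTop (nhds 0) := by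
    simpa using ((continuous_exp.tendsto 0).comp
      (tendsto_inv_atTop_zero.comp tendsto_natCast_atTop_atTop)).sub_const 1
  refine tendsto_of_tendsto_of_tendsto_of_le_of_le' tendsto_const_nhds hexp
    (Eventually.of_forall fun n => sub_nonneg.2 (one_le_pow₀ (le_add_of_nonneg_right
      (by positivity)))) ?_
  filter_upwards [eventually_ne_atTop 0] with n hn
  gcongr
  calc (1 + ((n : ℝ) ^ 2)⁻¹) ^ n ≤ exp ((n : ℝ) ^ 2)⁻¹ ^ n := by
        gcongr; linarith [add_one_le_exp ((n : ℝ) ^ 2)⁻¹]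
    _ = exp (n : ℝ)⁻¹ := by
        rw [← exp_nat_mul]; congr 1; field_simp

section Dense

variable {n : ℕ}

lemma gnp_exists_lt_edgesIn_le {p α : ℝ} (hp0 : 0 < p) (hpα : p ≤ α) (hα1 : α ≤ 1) {m : ℕ}
    (hm : 1 ≤ m) {x : ℝ} (hx : 0 ≤ x)
    (hρ : ∀ u, m ≤ u → (2 * p / (α + p)) ^ ⌊(α - p) / 2 * u.choose 2⌋₊ ≤ x ^ u) :
    gnp n p {ω | ∃ U : Finset (Fin n), m ≤ #U ∧ α * (#U).choose 2 < edgesIn (graphOf ω) U} ≤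
      ENNReal.ofReal ((1 + x) ^ n - 1) := by
  set F : Finset (Finset (Fin n)) := {U | m ≤ #U}
  have hset : {ω | ∃ U : Finset (Fin n), m ≤ #U ∧ α * (#U).choose 2 < edgesIn (graphOf ω) U} =
      ⋃ U ∈ F, {ω | α * (#U).choose 2 < edgesIn (graphOf ω) U} := by
    ext; simp [F]
  rw [hset]
  calc _ ≤ ∑ U ∈ F, gnp n p {ω | α * (#U).choose 2 < edgesIn (graphOf ω) U} :=
        measure_biUnion_finset_le F _
    _ ≤ ∑ U ∈ F, ENNReal.ofReal (x ^ #U) := sum_le_sum fun U hU =>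
        (gnp_lt_edgesIn_le hp0 hpα hα1 U).trans
          (ENNReal.ofReal_le_ofReal (hρ _ (mem_filter.1 hU).2))
    _ = ENNReal.ofReal (∑ U ∈ F, x ^ #U) :=
        (ENNReal.ofReal_sum_of_nonneg fun _ _ => by positivity).symm
    _ ≤ _ := ENNReal.ofReal_le_ofReal <| by
        simpa using sum_pow_card_le_one_add_pow_sub_one hx F (by simp [F]; omega)

theorem tendsto_gnp_exists_lt_edgesIn {p α : ℝ} (hp0 : 0 < p) (hpα : p < α) (hα1 : α ≤ 1) :
    ∃ m : ℕ → ℕ, (∀ n, 1 ≤ m n) ∧ (∃ a b : ℝ, ∀ n : ℕ, (m n : ℝ) ≤ a * log n + b) ∧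
      Tendsto (fun n => gnp n p {ω | ∃ U : Finset (Fin n), m n ≤ #U ∧
        α * (#U).choose 2 < edgesIn (graphOf ω) U}) atTop (nhds 0) := by
  set ρ := 2 * p / (α + p) with hρ
  set δ := (α - p) / 2 with hδ
  set γ := δ * -log ρ / 2
  have hρ0 : 0 < ρ := div_pos (by linarith) (by linarith)
  have hρ1 : ρ < 1 := by rw [hρ, div_lt_one (by linarith)]; linarith
  have hγ : 0 < γ := div_pos (mul_pos (by linarith) (neg_pos.2 (log_neg hρ0 hρ1))) two_pos
  refine ⟨fun n => ⌈(2 * log n - log ρ) / γ⌉₊ + 1, fun n => Nat.le_add_left 1 _,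
    ⟨2 / γ, -log ρ / γ + 2, fun n => ?_⟩, ?_⟩
  · have h := Nat.ceil_lt_add_one (R := ℝ) (a := (2 * log n - log ρ) / γ)
      (div_nonneg (by linarith [log_natCast_nonneg n, log_neg hρ0 hρ1]) hγ.le)
    have : (2 * log n - log ρ) / γ = 2 / γ * log n + -log ρ / γ := by ring
    push_cast
    linarith
  · refine tendsto_of_tendsto_of_tendsto_of_le_of_le' tendsto_const_nhds
      (by simpa using ENNReal.tendsto_ofReal tendsto_one_add_inv_sq_pow_sub_one)
      (Eventually.of_forall fun n => zero_le) ?_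
    filter_upwards [eventually_ge_atTop 1] with n hn
    refine gnp_exists_lt_edgesIn_le hp0 hpα.le hα1 (by omega) (by positivity) fun u hu => ?_
    refine pow_floor_mul_choose_two_le hρ0 hρ1.le (by positivity) ?_
    have : (2 * log n - log ρ) / γ ≤ u - 1 := by
      have := (Nat.le_ceil _).trans (Nat.cast_le.2 (Nat.le_sub_of_add_le hu))
      rwa [Nat.cast_sub (by omega), Nat.cast_one] at this
    rwa [div_le_iff₀' hγ] at this

end Dense

lemma eventually_mul_log_add_le_rpow (a b : ℝ) {ε : ℝ} (hε : 0 < ε) :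
    ∀ᶠ n : ℕ in atTop, a * log n + b ≤ (n : ℝ) ^ ε := by
  have hconst : (fun _ : ℝ => b) =o[atTop] fun x => x ^ ε :=
    Asymptotics.isLittleO_const_left.2 <| Or.inr <|
      tendsto_norm_atTop_atTop.comp (tendsto_rpow_atTop hε)
  have h := ((isLittleO_log_rpow_atTop hε).const_mul_left a).add hconst
  filter_upwards [tendsto_natCast_atTop_atTop.eventually (h.bound one_pos)] with n hn
  rw [one_mul, norm_eq_abs, norm_of_nonneg (by positivity)] at hn
  exact (le_abs_self _).trans hn

lemma pow_ceil_mul_log_le {r c N : ℝ} (hr : 1 < r) (hc : 0 ≤ c) (hN : 1 ≤ N) :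
    r ^ ⌈c * log N⌉₊ ≤ r * N ^ (c * log r) := by
  have hk : (⌈c * log N⌉₊ : ℝ) ≤ c * log N + 1 :=
    (Nat.ceil_lt_add_one (mul_nonneg hc (log_nonneg hN))).le
  calc r ^ ⌈c * log N⌉₊ = r ^ (⌈c * log N⌉₊ : ℝ) := (rpow_natCast r _).symm
    _ ≤ r ^ (c * log N + 1) := rpow_le_rpow_of_exponent_le hr.le hk
    _ = r * N ^ (c * log r) := by
        rw [rpow_add_one (by positivity), mul_comm, rpow_def_of_pos (by positivity),
          rpow_def_of_pos (by positivity)]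
        ring_nf

lemma eventually_pow_ceil_mul_log_mul_le {r c a b ε : ℝ} (hr : 1 < r) (hc : 0 ≤ c)
    (hε : 0 < ε) {m : ℕ → ℕ} (hm : ∀ n : ℕ, (m n : ℝ) ≤ a * log n + b) :
    ∀ᶠ n : ℕ in atTop, r ^ ⌈c * log n⌉₊ * (m n + 1) ≤ (n : ℝ) ^ (c * log r + ε) := by
  filter_upwards [eventually_mul_log_add_le_rpow (r * a) (r * (b + 1)) hε,
    eventually_ge_atTop 1] with n hsize hn
  have hn' : (1 : ℝ) ≤ n := by exact_mod_cast hn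
  calc r ^ ⌈c * log n⌉₊ * (m n + 1) ≤ r * (n : ℝ) ^ (c * log r) * (m n + 1) := by
        gcongr; exact pow_ceil_mul_log_le hr hc hn'
    _ = (n : ℝ) ^ (c * log r) * (r * (m n + 1)) := by ring
    _ ≤ (n : ℝ) ^ (c * log r) * (n : ℝ) ^ ε := by
        gcongr
        linarith [mul_le_mul_of_nonneg_left (add_le_add_right (hm n) 1) (zero_le_one.trans hr.le)]
    _ = (n : ℝ) ^ (c * log r + ε) := (rpow_add (by positivity) _ _).symm

theorem tendsto_measure_of_compl_subset {Ω : ℕ → Type*} [∀ n, MeasurableSpace (Ω n)]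
    {μ : ∀ n, Measure (Ω n)} [∀ n, IsProbabilityMeasure (μ n)] {s t : ∀ n, Set (Ω n)}
    (hs : Tendsto (fun n => μ n (s n)) atTop (nhds 0)) (hst : ∀ᶠ n in atTop, (s n)ᶜ ⊆ t n) :
    Tendsto (fun n => μ n (t n)) atTop (nhds 1) := by
  have h1 : Tendsto (fun n => 1 - μ n (s n)) atTop (nhds 1) := by
    simpa using ENNReal.Tendsto.sub tendsto_const_nhds hs (Or.inl ENNReal.one_ne_top)
  refine tendsto_of_tendsto_of_tendsto_of_le_of_le' h1 tendsto_const_nhds ?_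
    (Eventually.of_forall fun n => prob_le_one)
  filter_upwards [hst] with n hn
  calc 1 - μ n (s n) ≤ μ n (s n)ᶜ := by
        rw [tsub_le_iff_left, ← measure_univ (μ := μ n)]
        exact measure_univ_le_add_compl _
    _ ≤ μ n (t n) := measure_mono hn

/-- For fixed `0<p<1` and `G ∈ G(n,p)`, with probability tending to `1`,
every `W` with `|W| > n^{1/3}` contains an independent set (a clique of the complement) of
size at least `c·log n`, where `c = -1/(12·log((1-p)/2))`. -/
theorem stmt13 (p : ℝ) (hp0 : 0 < p) (hp1 : p < 1) :
    Tendsto (fun n : ℕ =>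
        gnp n p {ω | ∀ W : Finset (Fin n), (n : ℝ) ^ ((1 : ℝ) / 3) < W.card →
          ∃ S : Finset (Fin n), S ⊆ W ∧ (graphOf ω)ᶜ.IsClique (S : Set (Fin n)) ∧
            (-1 / (12 * Real.log ((1 - p) / 2))) * Real.log n ≤ S.card})
      atTop (nhds 1) := by
  set α := (1 + p) / 2 with hα
  obtain ⟨m, hm1, ⟨a, b, hm⟩, hdense⟩ :=
    tendsto_gnp_exists_lt_edgesIn hp0 (by linarith : p < α) (by linarith : α ≤ 1)
  set c := -1 / (12 * Real.log ((1 - p) / 2)) with hc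
  have hlog : Real.log ((1 - p) / 2) < 0 := Real.log_neg (by linarith) (by linarith)
  have hc0 : 0 ≤ c := div_nonneg_of_nonpos (by norm_num) (by linarith)
  have hr : 1 < (1 - α)⁻¹ := (one_lt_inv₀ (by linarith)).2 (by linarith)
  have hcr : c * Real.log (1 - α)⁻¹ = 1 / 12 := by
    rw [Real.log_inv, show 1 - α = (1 - p) / 2 by ring, hc]; field_simp [hlog.ne]
  refine tendsto_measure_of_compl_subset hdense ?_
  filter_upwards [eventually_pow_ceil_mul_log_mul_le hr hc0 (by norm_num : (0 : ℝ) < 1 / 4) hm]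
    with n hk ω hω W hW
  rw [hcr, show (1 / 12 + 1 / 4 : ℝ) = 1 / 3 by norm_num] at hk
  have hsparse (U : Finset (Fin n)) (hU : m n ≤ U.card) :
      ∃ v ∈ U, ((U.filter ((graphOf ω).Adj v)).card : ℝ) ≤ α * (U.card - 1) :=
    exists_card_adj_le_of_edgesIn_le _ (Finset.card_pos.1 ((hm1 n).trans hU))
      (not_lt.1 fun h => hω ⟨U, hU, h⟩)
  obtain ⟨S, hSW, hS⟩ := exists_isNIndepSet_of_forall_exists_degree_le (graphOf ω)
    (by linarith) (by linarith) hsparse ⌈c * Real.log n⌉₊ W (by linarith)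
  exact ⟨S, hSW, (SimpleGraph.isClique_compl _).2 hS.isIndepSet, hS.card_eq ▸ Nat.le_ceil _⟩
end
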